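/- Let x ∈ ℝ^d and let (a_j, b_j), j = 1,…,n, be index pairs such that all 2n involved indices are pairwise distinct. Define Δ_j = |x_{a_j} - x_{b_j}|/2 and sort them so that Δ_{i_1} ≤ Δ_{i_2} ≤ … ≤ Δ_{i_n}. Define w(x)_j = 0 if x_{a_j} ≥ x_{b_j} and 1 otherwise, and let d(w(x+ε), w(x)) = #{j : w(x+ε)_j ≠ w(x)_j} be the Hamming distance. Then for any ε ∈ ℝ^d with ‖ε‖_∞ < Δ_{i_k}, one has d(w(x+ε), w(x)) < k. -/
import Mathlib


open scoped Classical

/-- Watermark bit: `false` (0) iff the first pixel is ≥ the second. -/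
noncomputable def wbit (u v : ℝ) : Bool := decide (u < v)

/-- If the perturbation is (componentwise) smaller than the half-gap, the bit is stable. -/
lemma wbit_stable (u v eu ev E : ℝ) (hu : |eu| ≤ E) (hv : |ev| ≤ E)
    (h : E < |u - v| / 2) : wbit (u + eu) (v + ev) = wbit u v := by
  have hu' := abs_lt.mp (lt_of_le_of_lt hu h)
  have hv' := abs_lt.mp (lt_of_le_of_lt hv h)
  rcases abs_cases (u - v) with ⟨he, _⟩ | ⟨he, _⟩ <;>
    simp only [wbit, decide_eq_decide] <;> rw [he] at h <;> constructor <;> intro <;> linarith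

/-- Lemma 1: if the Δ's are sorted increasingly by `σ` and
`‖ε‖_∞ < Δ_{i_k}` (the k-th smallest half-gap, 1-indexed as `σ k` for `k : Fin n`),
then the Hamming distance between the extracted and the original watermark is `< k`. -/
theorem watermark_robustness (d n : ℕ) (x ε : Fin d → ℝ) (a b : Fin n → Fin d)
    (hdist : Function.Injective (Sum.elim a b))
    (Δ : Fin n → ℝ) (hΔ : ∀ j, Δ j = |x (a j) - x (b j)| / 2)
    (σ : Equiv.Perm (Fin n)) (hsort : Monotone (fun j => Δ (σ j)))
    (k : Fin n) (hε : ‖ε‖ < Δ (σ k)) :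
    (Finset.univ.filter fun j =>
        wbit ((x + ε) (a j)) ((x + ε) (b j)) ≠ wbit (x (a j)) (x (b j))).card
      < (k : ℕ) + 1 := by
  set S := Finset.univ.filter fun j =>
      wbit ((x + ε) (a j)) ((x + ε) (b j)) ≠ wbit (x (a j)) (x (b j)) with hS
  have hsub : S ⊆ Finset.univ.filter fun j => Δ j < Δ (σ k) := by
    intro j hj
    simp only [hS, Finset.mem_filter, Finset.mem_univ, true_and] at hj ⊢
    by_contra hle
    push_neg at hle
    apply hj
    have hE : ‖ε‖ < Δ j := lt_of_lt_of_le hε hle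
    have := wbit_stable (x (a j)) (x (b j)) (ε (a j)) (ε (b j)) ‖ε‖
      (by simpa using norm_le_pi_norm ε (a j)) (by simpa using norm_le_pi_norm ε (b j))
      (by rw [← hΔ j]; exact hE)
    simpa using this
  have hcard : (Finset.univ.filter fun j => Δ j < Δ (σ k)).card ≤ (k : ℕ) := by
    have himg : (Finset.univ.filter fun j => Δ j < Δ (σ k)).image σ.symm ⊆
        Finset.univ.filter fun m => m < k := by
      intro m hm
      simp only [Finset.mem_image, Finset.mem_filter, Finset.mem_univ, true_and] at hm ⊢
      obtain ⟨j, hj, rfl⟩ := hm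
      by_contra hge
      push_neg at hge
      have := hsort hge
      simp only [Equiv.apply_symm_apply] at this
      exact absurd hj (not_lt.mpr this)
    calc (Finset.univ.filter fun j => Δ j < Δ (σ k)).card
        = ((Finset.univ.filter fun j => Δ j < Δ (σ k)).image σ.symm).card :=
          (Finset.card_image_of_injective _ σ.symm.injective).symm
      _ ≤ (Finset.univ.filter fun m => m < k).card := Finset.card_le_card himg
      _ ≤ (k : ℕ) := by
          rw [show (Finset.univ.filter fun m : Fin n => m < k) = Finset.Iio k by
            ext m; simp [Finset.mem_Iio]]
          simp [Fin.card_Iio k]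
    -- done
  exact lt_of_le_of_lt (Finset.card_le_card hsub) (lt_of_le_of_lt hcard (Nat.lt_succ_self _))
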